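/- Let R and S be linear collapse-free TRSs over disjoint ranked alphabets Σ and Δ respectively, let Γ be a ranked alphabet with Σ ∪ Δ ⊆ Γ, and consider R and S as TRSs over Γ. Then →*_{R∪S} = →*_R ∘ →*_S, i.e., u →*_{R∪S} w if and only if there exists v with u →*_R v and v →*_S w. -/

import Mathlib

set_option autoImplicit false

/-!
Basic framework: ranked alphabets, terms, term rewrite systems,
bottom-up tree automata, recognizability.
A ranked alphabet is modelled by a (finite) type `σ` together with an
arity function `ar : σ → ℕ`.  `Tm.var n` denotes the variable `x_{n+1}`,
so `T_Σ(X_m)` corresponds to terms all of whose variables satisfy `n < m`,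
and ground terms (`T_Σ`) are terms satisfying `Tm.Ground`.
-/

/-- Terms over the ranked alphabet `(σ, ar)` with variables `x₁, x₂, …`
(`var n` is `x_{n+1}`). -/
inductive Tm (σ : Type) (ar : σ → ℕ) : Type
  | var : ℕ → Tm σ ar
  | app : (f : σ) → (Fin (ar f) → Tm σ ar) → Tm σ ar

namespace Tm

variable {σ γ : Type} {ar : σ → ℕ} {arγ : γ → ℕ}

/-- Application of a substitution `θ` (assigning a term to each variable). -/
def subst (θ : ℕ → Tm σ ar) : Tm σ ar → Tm σ ar
  | var n => θ n
  | app f ts => app f fun i => (ts i).subst θ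

/-- A term is ground if it contains no variables. -/
def Ground : Tm σ ar → Prop
  | var _ => False
  | app _ ts => ∀ i, (ts i).Ground

/-- The set of (indices of) variables occurring in a term. -/
def vars : Tm σ ar → Set ℕ
  | var n => {n}
  | app _ ts => ⋃ i, (ts i).vars

/-- Number of occurrences of the variable `x_{n+1}` in a term. -/
def count (n : ℕ) : Tm σ ar → ℕ
  | var m => if m = n then 1 else 0
  | app _ ts => ∑ i, (ts i).count n

/-- A term is linear if every variable occurs at most once in it. -/
def Linear (t : Tm σ ar) : Prop := ∀ n, t.count n ≤ 1

/-- The symbol `s` occurs in the term. -/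
def symOccurs (s : σ) : Tm σ ar → Prop
  | var _ => False
  | app f ts => f = s ∨ ∃ i, (ts i).symOccurs s

/-- Height of a term (constants and variables have height 0). -/
def height : Tm σ ar → ℕ
  | var _ => 0
  | app _ ts => Finset.univ.sup fun i => (ts i).height + 1

/-- Renaming of the alphabet along an arity-preserving map. -/
def map (ι : σ → γ) (h : ∀ s, arγ (ι s) = ar s) : Tm σ ar → Tm γ arγ
  | var n => var n
  | app f ts => app (ι f) fun i => (ts (Fin.cast (h f) i)).map ι h

/-- The subterm of `t` at a position (a list of argument indices), if defined. -/
def subAt : Tm σ ar → List ℕ → Option (Tm σ ar)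
  | t, [] => some t
  | var _, _ :: _ => none
  | app f ts, i :: p => if h : i < ar f then (ts ⟨i, h⟩).subAt p else none

/-- Subterm relation. -/
inductive Subtm : Tm σ ar → Tm σ ar → Prop
  | refl (t : Tm σ ar) : Subtm t t
  | app {s : Tm σ ar} {f : σ} {ts : Fin (ar f) → Tm σ ar} (i : Fin (ar f)) :
      Subtm s (ts i) → Subtm s (Tm.app f ts)

end Tm

section Rewriting

variable {σ γ : Type} {ar : σ → ℕ} {arγ : γ → ℕ}

/-- One-step rewriting by the rule set `R`: apply a rule under a substitution
at the root, or rewrite inside one argument. -/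
inductive Step (R : Set (Tm σ ar × Tm σ ar)) : Tm σ ar → Tm σ ar → Prop
  | rule {l r : Tm σ ar} (θ : ℕ → Tm σ ar) (h : (l, r) ∈ R) :
      Step R (l.subst θ) (r.subst θ)
  | congr {f : σ} {ts : Fin (ar f) → Tm σ ar} {t' : Tm σ ar} (i : Fin (ar f)) :
      Step R (ts i) t' → Step R (Tm.app f ts) (Tm.app f (Function.update ts i t'))

/-- Many-step rewriting: reflexive-transitive closure of `Step`. -/
def Steps (R : Set (Tm σ ar × Tm σ ar)) : Tm σ ar → Tm σ ar → Prop :=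
  Relation.ReflTransGen (Step R)

/-- `R` is a term rewrite system: finitely many rules, and every variable of a
right-hand side occurs in the corresponding left-hand side. -/
def IsTRS (R : Set (Tm σ ar × Tm σ ar)) : Prop :=
  R.Finite ∧ ∀ lr ∈ R, lr.2.vars ⊆ lr.1.vars

/-- The set `R*(L)` of descendants of members of `L`. -/
def Desc (R : Set (Tm σ ar × Tm σ ar)) (L : Set (Tm σ ar)) : Set (Tm σ ar) :=
  {p | ∃ q ∈ L, Steps R q p}

/-- `R` is terminating: there is no infinite reduction sequence. -/
def Terminating (R : Set (Tm σ ar × Tm σ ar)) : Prop :=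
  ¬ ∃ f : ℕ → Tm σ ar, ∀ n, Step R (f n) (f (n + 1))

/-- `R` is confluent. -/
def Confluent (R : Set (Tm σ ar × Tm σ ar)) : Prop :=
  ∀ a b c, Steps R a b → Steps R a c → ∃ d, Steps R b d ∧ Steps R c d

/-- `u` is an `R`-normal form of `t`. -/
def NormalFormOf (R : Set (Tm σ ar × Tm σ ar)) (t u : Tm σ ar) : Prop :=
  Steps R t u ∧ ¬ ∃ v, Step R u v

/-- The term is a variable. -/
def IsVarTm (t : Tm σ ar) : Prop := ∃ n, t = Tm.var n

/-- Every left-hand side is linear. -/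
def LeftLinearTRS (R : Set (Tm σ ar × Tm σ ar)) : Prop :=
  ∀ lr ∈ R, lr.1.Linear

/-- All left- and right-hand sides are linear. -/
def LinearTRS (R : Set (Tm σ ar × Tm σ ar)) : Prop :=
  ∀ lr ∈ R, lr.1.Linear ∧ lr.2.Linear

/-- No rule has a variable as left-hand side or as right-hand side. -/
def CollapseFree (R : Set (Tm σ ar × Tm σ ar)) : Prop :=
  ∀ lr ∈ R, ¬ IsVarTm lr.1 ∧ ¬ IsVarTm lr.2

/-- Transport of a rule set along an arity-preserving renaming of the alphabet. -/
def mapRules (ι : σ → γ) (h : ∀ s, arγ (ι s) = ar s) (R : Set (Tm σ ar × Tm σ ar)) :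
    Set (Tm γ arγ × Tm γ arγ) :=
  (fun lr => (lr.1.map ι h, lr.2.map ι h)) '' R

end Rewriting

/-- A bottom-up tree automaton over `(σ, ar)` with state type `Q`:
transition rules `δ(q₁,…,qₙ) → q`, λ-rules `q → q'`, and final states. -/
structure BTA (σ : Type) (ar : σ → ℕ) (Q : Type) where
  trans : ∀ f : σ, (Fin (ar f) → Q) → Q → Prop
  eps : Q → Q → Prop
  final : Q → Prop

namespace BTA

variable {σ : Type} {ar : σ → ℕ} {Q : Type}

/-- `t →* q`: the (ground) term `t` can be rewritten to the state `q`. -/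
inductive Reach (A : BTA σ ar Q) : Tm σ ar → Q → Prop
  | app {f : σ} {ts : Fin (ar f) → Tm σ ar} {qs : Fin (ar f) → Q} {q : Q} :
      (∀ i, Reach A (ts i) (qs i)) → A.trans f qs q → Reach A (Tm.app f ts) q
  | eps {t : Tm σ ar} {q q' : Q} : Reach A t q → A.eps q q' → Reach A t q'

/-- The tree language recognized by the automaton. -/
def Lang (A : BTA σ ar Q) : Set (Tm σ ar) := {t | ∃ q, A.final q ∧ A.Reach t q}

end BTA

/-- A tree language is recognizable if some bottom-up tree automaton with a
finite state set recognizes it. -/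
def Recognizable {σ : Type} {ar : σ → ℕ} (L : Set (Tm σ ar)) : Prop :=
  ∃ (Q : Type) (_ : Finite Q) (A : BTA σ ar Q), A.Lang = L

/-- `R` (a TRS over all of `σ`, thought of as `sign(R)`) preserves
recognizability of finite tree languages: for every ranked alphabet extending
`σ` (i.e. every finite type with an arity-preserving injection from `σ`) and
every finite tree language of ground terms, the descendant set is recognizable. -/
def PRF {σ : Type} {ar : σ → ℕ} (R : Set (Tm σ ar × Tm σ ar)) : Prop :=
  ∀ (γ : Type) (arγ : γ → ℕ), Finite γ →
    ∀ ι : σ → γ, Function.Injective ι →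
      ∀ h : ∀ s, arγ (ι s) = ar s,
        ∀ L : Set (Tm γ arγ), L.Finite → (∀ t ∈ L, t.Ground) →
          Recognizable (Desc (mapRules ι h R) L)

/-- `R` preserves recognizability: as `PRF`, but for arbitrary recognizable
tree languages. -/
def PR {σ : Type} {ar : σ → ℕ} (R : Set (Tm σ ar × Tm σ ar)) : Prop :=
  ∀ (γ : Type) (arγ : γ → ℕ), Finite γ →
    ∀ ι : σ → γ, Function.Injective ι →
      ∀ h : ∀ s, arγ (ι s) = ar s,
        ∀ L : Set (Tm γ arγ), Recognizable L →
          Recognizable (Desc (mapRules ι h R) L)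


/-!
An `R ∪ S`-reduction can be reordered into an `R`-reduction followed by an `S`-reduction as soon
as every `S`-step followed by an `R`-step can be replaced by an `R`-step followed by `S`-steps.
Let `A` be the alphabet of `R`; the symbols of `S` lie outside `A`.
If the `R`-step rewrites the contractum `r θ` of an `S`-step `l θ → r θ`, it cannot overlap the
non-variable part of `r`, so it rewrites inside `θ x` for a variable `x` occurring once in `r`;
as `x` also occurs exactly once in the linear `l`, the `R`-step can be done first in `l θ`.
If the `R`-step contracts a redex `l' θ` created by the `S`-step, that `S`-step cannot overlap
`l'` either, because no right-hand side of `S` is a variable; so it takes place inside some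
`θ x`, and after contracting the `R`-redex first, the at most one copy of `θ x` left in the
linear right-hand side is rewritten by the same `S`-step.
-/

namespace Relation

variable {α : Type*} {r s : α → α → Prop}

theorem ReflTransGen.postpone (h : ∀ a b c, s a b → r b c → ∃ d, r a d ∧ ReflTransGen s d c)
    {a b c : α} (hab : ReflTransGen s a b) (hbc : r b c) : ∃ d, r a d ∧ ReflTransGen s d c := by
  induction hab using ReflTransGen.head_induction_on with
  | refl => exact ⟨c, hbc, .refl⟩
  | head hab' _ ih =>
    obtain ⟨m, hm, hmc⟩ := ih
    obtain ⟨d, hd, hdm⟩ := h _ _ _ hab' hm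
    exact ⟨d, hd, hdm.trans hmc⟩

theorem reflTransGen_sup_eq_comp (h : ∀ a b c, s a b → r b c → ∃ d, r a d ∧ ReflTransGen s d c) :
    ReflTransGen (r ⊔ s) = Comp (ReflTransGen r) (ReflTransGen s) := by
  ext a c
  constructor
  · intro hac
    induction hac with
    | refl => exact ⟨a, .refl, .refl⟩
    | tail _ hbc ih =>
      obtain ⟨m, ham, hmb⟩ := ih
      rcases hbc with hbc | hbc
      · obtain ⟨d, hmd, hdc⟩ := hmb.postpone h hbc
        exact ⟨d, ham.tail hmd, hdc⟩
      · exact ⟨m, ham, hmb.tail hbc⟩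
  · rintro ⟨b, hab, hbc⟩
    exact (ReflTransGen.mono (fun _ _ => Or.inl) _ _ hab).trans
      (ReflTransGen.mono (fun _ _ => Or.inr) _ _ hbc)

end Relation

namespace Tm

variable {σ : Type} {ar : σ → ℕ}

def SymsIn (A : Set σ) : Tm σ ar → Prop
  | var _ => True
  | app f ts => f ∈ A ∧ ∀ i, (ts i).SymsIn A

theorem SymsIn.mono {A B : Set σ} (hAB : A ⊆ B) {t : Tm σ ar} (ht : t.SymsIn A) :
    t.SymsIn B := by
  induction t with
  | var _ => trivial
  | app f ts ih => exact ⟨hAB ht.1, fun i => ih i (ht.2 i)⟩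

theorem SymsIn.exists_eq_app {A : Set σ} {t : Tm σ ar} (ht : t.SymsIn A) (hvar : ¬ IsVarTm t) :
    ∃ f ts, t = app f ts ∧ f ∈ A := by
  cases t with
  | var n => exact absurd ⟨n, rfl⟩ hvar
  | app f ts => exact ⟨f, ts, rfl, ht.1⟩

theorem mem_vars_app {f : σ} {ts : Fin (ar f) → Tm σ ar} {x : ℕ} :
    x ∈ (app f ts).vars ↔ ∃ i, x ∈ (ts i).vars :=
  Set.mem_iUnion

theorem count_pos_iff {t : Tm σ ar} {x : ℕ} : 0 < t.count x ↔ x ∈ t.vars := by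
  induction t with
  | var n => by_cases h : n = x <;> simp [count, vars, h, Ne.symm]
  | app f ts ih => simp [count, Finset.sum_pos_iff, ih, mem_vars_app]

theorem Linear.arg {f : σ} {ts : Fin (ar f) → Tm σ ar} (h : (app f ts).Linear) (i : Fin (ar f)) :
    (ts i).Linear := fun x =>
  (Finset.single_le_sum (f := fun j => (ts j).count x) (fun _ _ => Nat.zero_le _)
    (Finset.mem_univ i)).trans (h x)

theorem Linear.notMem_vars_of_ne {f : σ} {ts : Fin (ar f) → Tm σ ar} (h : (app f ts).Linear)
    {x : ℕ} {i j : Fin (ar f)} (hx : x ∈ (ts i).vars) (hji : j ≠ i) : x ∉ (ts j).vars := by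
  intro hxj
  have hpair : (ts i).count x + (ts j).count x ≤ (app f ts).count x := by
    rw [← Finset.sum_pair (f := fun k => (ts k).count x) hji.symm]
    exact Finset.sum_le_sum_of_subset (Finset.subset_univ _)
  have := count_pos_iff.2 hx
  have := count_pos_iff.2 hxj
  have := h x
  omega

theorem subst_congr {t : Tm σ ar} {θ θ' : ℕ → Tm σ ar} (h : ∀ x ∈ t.vars, θ x = θ' x) :
    t.subst θ = t.subst θ' := by
  induction t with
  | var n => exact h n rfl
  | app f ts ih =>
    simp only [subst, app.injEq, heq_eq_eq, true_and]
    exact funext fun i => ih i fun x hx => h x (mem_vars_app.2 ⟨i, hx⟩)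

theorem subst_update_of_notMem {t : Tm σ ar} {x : ℕ} (hx : x ∉ t.vars) (θ : ℕ → Tm σ ar)
    (a : Tm σ ar) : t.subst (Function.update θ x a) = t.subst θ :=
  subst_congr fun _ hy => Function.update_of_ne (ne_of_mem_of_not_mem hy hx) _ _

theorem Linear.subst_update_args {f : σ} {ts : Fin (ar f) → Tm σ ar} (h : (app f ts).Linear)
    {x : ℕ} {i : Fin (ar f)} (hx : x ∈ (ts i).vars) (θ : ℕ → Tm σ ar) (a : Tm σ ar) :
    (fun j => (ts j).subst (Function.update θ x a)) =
      Function.update (fun j => (ts j).subst θ) i ((ts i).subst (Function.update θ x a)) := by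
  funext j
  by_cases hji : j = i
  · subst hji; simp
  · rw [Function.update_of_ne hji, subst_update_of_notMem (h.notMem_vars_of_ne hx hji)]

end Tm

section Rewriting

open Tm

variable {σ : Type} {ar : σ → ℕ} {X Y : Set (Tm σ ar × Tm σ ar)}

theorem step_union : Step (X ∪ Y) = Step X ⊔ Step Y := by
  ext a b
  constructor
  · intro h
    induction h with
    | rule θ hmem => exact hmem.imp (Step.rule θ) (Step.rule θ)
    | congr i _ ih => exact ih.imp (Step.congr i) (Step.congr i)
  · rintro (h | h) <;> induction h with
    | rule θ hmem => first | exact Step.rule θ (Or.inl hmem) | exact Step.rule θ (Or.inr hmem)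
    | congr i _ ih => exact Step.congr i ih

theorem Steps.congr {f : σ} {ts : Fin (ar f) → Tm σ ar} (i : Fin (ar f)) {b : Tm σ ar}
    (h : Steps X (ts i) b) : Steps X (app f ts) (app f (Function.update ts i b)) := by
  induction h with
  | refl => rw [Function.update_eq_self]; exact .refl
  | tail _ hstep ih =>
    refine ih.tail ?_
    simpa using Step.congr (ts := Function.update ts i _) i (by simpa using hstep)

theorem Step.swap {a b : Tm σ ar} (h : Step X a b) : Step (Prod.swap ⁻¹' X) b a := by
  induction h with
  | rule θ hmem => exact Step.rule θ hmem
  | @congr f ts t' i _ ih =>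
    have := Step.congr (ts := Function.update ts i t') i (by rwa [Function.update_self])
    rwa [Function.update_idem, Function.update_eq_self] at this

theorem Step.subst_update {t : Tm σ ar} (ht : t.Linear) {x : ℕ} (hx : x ∈ t.vars)
    {θ : ℕ → Tm σ ar} {a : Tm σ ar} (h : Step X (θ x) a) :
    Step X (t.subst θ) (t.subst (Function.update θ x a)) := by
  induction t with
  | var n =>
    obtain rfl : x = n := hx
    simpa [subst] using h
  | app f ts ih =>
    obtain ⟨i, hi⟩ := mem_vars_app.1 hx
    simp only [subst]
    rw [ht.subst_update_args hi]
    exact Step.congr i (ih i (ht.arg i) hi)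

theorem Steps.subst_update {t : Tm σ ar} (ht : t.Linear) (x : ℕ) (θ : ℕ → Tm σ ar)
    {a b : Tm σ ar} (h : Step X a b) :
    Steps X (t.subst (Function.update θ x a)) (t.subst (Function.update θ x b)) := by
  by_cases hx : x ∈ t.vars
  · refine .single ?_
    simpa using Step.subst_update ht hx (θ := Function.update θ x a) (by simpa using h)
  · rw [subst_update_of_notMem hx, subst_update_of_notMem hx]
    exact .refl

variable {B : Set σ} {l : Tm σ ar} {θ : ℕ → Tm σ ar}

theorem Step.exists_of_subst_left (hX : ∀ lr ∈ X, ∃ f ts, lr.1 = app f ts ∧ f ∉ B)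
    (hl : l.Linear) (hlB : l.SymsIn B) {w : Tm σ ar} (h : Step X (l.subst θ) w) :
    ∃ x ∈ l.vars, ∃ a, Step X (θ x) a ∧ w = l.subst (Function.update θ x a) := by
  induction l generalizing w with
  | var n => exact ⟨n, rfl, w, h, by simp [subst]⟩
  | app f ls ih =>
    generalize hv : (app f ls).subst θ = v at h
    cases h with
    | @rule l' r θ' hmem =>
      obtain ⟨g, ts, rfl : l' = app g ts, hg⟩ := hX _ hmem
      simp only [subst] at hv
      injection hv with hgf
      exact (hg (hgf ▸ hlB.1)).elim
    | congr i hst =>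
      cases hv
      obtain ⟨x, hx, a, ha, rfl⟩ := ih i (hl.arg i) (hlB.2 i) hst
      exact ⟨x, mem_vars_app.2 ⟨i, hx⟩, a, ha, by simp only [subst, hl.subst_update_args hx]⟩

theorem Step.exists_of_subst_right (hX : ∀ lr ∈ X, ∃ f ts, lr.2 = app f ts ∧ f ∉ B)
    (hl : l.Linear) (hlB : l.SymsIn B) {s : Tm σ ar} (h : Step X s (l.subst θ)) :
    ∃ x ∈ l.vars, ∃ a, Step X a (θ x) ∧ s = l.subst (Function.update θ x a) := by
  obtain ⟨x, hx, a, ha, rfl⟩ :=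
    h.swap.exists_of_subst_left (X := Prod.swap ⁻¹' X) (fun lr hlr => hX _ hlr) hl hlB
  -- `Prod.swap ⁻¹' (Prod.swap ⁻¹' X)` is `X` by structure eta
  exact ⟨x, hx, a, ha.swap, rfl⟩

variable {R S : Set (Tm σ ar × Tm σ ar)} {A : Set σ} {r : Tm σ ar}

theorem Step.postpone_rule_step (hR : ∀ lr ∈ R, ∃ f ts, lr.1 = app f ts ∧ f ∉ B)
    (hlr : (l, r) ∈ S) (hl : l.Linear) (hr : r.Linear) (hrl : r.vars ⊆ l.vars)
    (hrB : r.SymsIn B) {w : Tm σ ar} (h : Step R (r.subst θ) w) :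
    ∃ v, Step R (l.subst θ) v ∧ Steps S v w := by
  obtain ⟨x, hx, a, ha, rfl⟩ := h.exists_of_subst_left hR hr hrB
  exact ⟨_, ha.subst_update hl (hrl hx), .single (Step.rule _ hlr)⟩

theorem Step.postpone_step_rule (hS : ∀ lr ∈ S, ∃ f ts, lr.2 = app f ts ∧ f ∉ A)
    (hlr : (l, r) ∈ R) (hl : l.Linear) (hr : r.Linear) (hlA : l.SymsIn A) {u : Tm σ ar}
    (h : Step S u (l.subst θ)) : ∃ v, Step R u v ∧ Steps S v (r.subst θ) := by
  obtain ⟨x, -, a, ha, rfl⟩ := h.exists_of_subst_right hS hl hlA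
  refine ⟨_, Step.rule _ hlr, ?_⟩
  simpa using Steps.subst_update hr x θ ha

theorem Step.postpone_congr_congr {f : σ} {ts : Fin (ar f) → Tm σ ar} {i j : Fin (ar f)}
    {t t' : Tm σ ar} (hst : Step S (ts i) t) (hst' : Step R (Function.update ts i t j) t')
    (ih : ∀ {w}, Step R t w → ∃ v, Step R (ts i) v ∧ Steps S v w) :
    ∃ v, Step R (app f ts) v ∧
      Steps S v (app f (Function.update (Function.update ts i t) j t')) := by
  by_cases hji : j = i
  · subst hji
    rw [Function.update_self] at hst'
    obtain ⟨m, hm, hmt'⟩ := ih hst'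
    refine ⟨_, Step.congr j hm, ?_⟩
    simpa using Steps.congr j (ts := Function.update ts j m) (by simpa using hmt')
  · rw [Function.update_of_ne hji] at hst'
    refine ⟨_, Step.congr j hst', .single ?_⟩
    have := Step.congr (ts := Function.update ts j t') i
      (by rwa [Function.update_of_ne (Ne.symm hji)])
    rwa [Function.update_comm hji] at this

theorem Step.postpone
    (hR : ∀ lr ∈ R, lr.1.Linear ∧ lr.2.Linear ∧ ¬ IsVarTm lr.1 ∧ lr.1.SymsIn A)
    (hS : ∀ lr ∈ S, lr.1.Linear ∧ lr.2.Linear ∧ lr.2.vars ⊆ lr.1.vars ∧ ¬ IsVarTm lr.2 ∧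
      lr.2.SymsIn Aᶜ)
    {u v w : Tm σ ar} (huv : Step S u v) (hvw : Step R v w) : ∃ v', Step R u v' ∧ Steps S v' w := by
  have hRroot : ∀ lr ∈ R, ∃ f ts, lr.1 = app f ts ∧ f ∉ Aᶜ := fun lr hlr => by
    obtain ⟨-, -, hvar, hA⟩ := hR lr hlr
    obtain ⟨f, ts, h, hf⟩ := hA.exists_eq_app hvar
    exact ⟨f, ts, h, Set.notMem_compl_iff.2 hf⟩
  have hSroot : ∀ lr ∈ S, ∃ f ts, lr.2 = app f ts ∧ f ∉ A := fun lr hlr => by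
    obtain ⟨-, -, -, hvar, hA⟩ := hS lr hlr
    exact hA.exists_eq_app hvar
  induction huv generalizing w with
  | rule θ hmem =>
    obtain ⟨hl, hr, hrl, -, hrA⟩ := hS _ hmem
    exact Step.postpone_rule_step hRroot hmem hl hr hrl hrA hvw
  | congr i hst ih =>
    generalize hv : app _ _ = v at hvw
    cases hvw with
    | rule θ hmem =>
      obtain ⟨hl, hr, -, hlA⟩ := hR _ hmem
      exact Step.postpone_step_rule hSroot hmem hl hr hlA (hv ▸ Step.congr i hst)
    | congr j hst' =>
      cases hv
      exact Step.postpone_congr_congr hst hst' ih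

end Rewriting

namespace Tm

variable {σ γ : Type} {ar : σ → ℕ} {arγ : γ → ℕ} {ι : σ → γ} {h : ∀ s, arγ (ι s) = ar s}

theorem count_map (t : Tm σ ar) (n : ℕ) : (t.map ι h).count n = t.count n := by
  induction t with
  | var m => rfl
  | app f ts ih =>
    simp only [map, count, ih]
    exact Fintype.sum_equiv (finCongr (h f)) _ _ fun _ => rfl

theorem Linear.map {t : Tm σ ar} (ht : t.Linear) : (t.map ι h).Linear := fun n =>
  count_map t n ▸ ht n

theorem vars_map (t : Tm σ ar) : (t.map ι h).vars = t.vars := by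
  ext x
  induction t with
  | var m => rfl
  | app f ts ih =>
    simp only [map, mem_vars_app, ih]
    exact (finCongr (h f)).exists_congr_left

theorem symsIn_range_map (t : Tm σ ar) : (t.map ι h).SymsIn (Set.range ι) := by
  induction t with
  | var m => trivial
  | app f ts ih => exact ⟨⟨f, rfl⟩, fun i => ih _⟩

theorem not_isVarTm_map {t : Tm σ ar} (ht : ¬ IsVarTm t) : ¬ IsVarTm (t.map ι h) := by
  cases t with
  | var n => exact absurd ⟨n, rfl⟩ ht
  | app f ts => rintro ⟨n, ⟨⟩⟩

end Tm

theorem stmt_16_general {σ δ γ : Type} {ar : σ → ℕ} {arδ : δ → ℕ} {arγ : γ → ℕ}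
    (R : Set (Tm σ ar × Tm σ ar)) (S : Set (Tm δ arδ × Tm δ arδ))
    (hS : IsTRS S)
    (hRlin : LinearTRS R) (hSlin : LinearTRS S)
    (hRcf : CollapseFree R) (hScf : CollapseFree S)
    -- `Γ` is a ranked alphabet containing the disjoint alphabets `Σ` and `Δ`
    (ι₁ : σ → γ) (ι₂ : δ → γ)
    (har₁ : ∀ s, arγ (ι₁ s) = ar s) (har₂ : ∀ s, arγ (ι₂ s) = arδ s)
    (hdisj : ∀ s t, ι₁ s ≠ ι₂ t)
    (u w : Tm γ arγ) :
    -- `u →*_{R∪S} w` iff `u →*_R v →*_S w` for some `v`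
    Steps (mapRules ι₁ har₁ R ∪ mapRules ι₂ har₂ S) u w ↔
      ∃ v : Tm γ arγ,
        Steps (mapRules ι₁ har₁ R) u v ∧ Steps (mapRules ι₂ har₂ S) v w := by
  have hR' : ∀ lr ∈ mapRules ι₁ har₁ R,
      lr.1.Linear ∧ lr.2.Linear ∧ ¬ IsVarTm lr.1 ∧ lr.1.SymsIn (Set.range ι₁) := by
    rintro _ ⟨lr, hlr, rfl⟩
    exact ⟨(hRlin lr hlr).1.map, (hRlin lr hlr).2.map, Tm.not_isVarTm_map (hRcf lr hlr).1,
      Tm.symsIn_range_map _⟩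
  have hS' : ∀ lr ∈ mapRules ι₂ har₂ S, lr.1.Linear ∧ lr.2.Linear ∧ lr.2.vars ⊆ lr.1.vars ∧
      ¬ IsVarTm lr.2 ∧ lr.2.SymsIn (Set.range ι₁)ᶜ := by
    rintro _ ⟨lr, hlr, rfl⟩
    refine ⟨(hSlin lr hlr).1.map, (hSlin lr hlr).2.map, ?_, Tm.not_isVarTm_map (hScf lr hlr).2,
      (Tm.symsIn_range_map _).mono ?_⟩
    · simpa only [Tm.vars_map] using hS.2 lr hlr
    · rintro _ ⟨t, rfl⟩ ⟨s, hs⟩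
      exact hdisj s t hs
  unfold Steps
  rw [step_union, Relation.reflTransGen_sup_eq_comp fun _ _ _ => Step.postpone hR' hS']
  rfl

theorem stmt_16 {σ δ γ : Type} {ar : σ → ℕ} {arδ : δ → ℕ} {arγ : γ → ℕ}
    [Finite σ] [Finite δ] [Finite γ]
    (R : Set (Tm σ ar × Tm σ ar)) (S : Set (Tm δ arδ × Tm δ arδ))
    (hR : IsTRS R) (hS : IsTRS S)
    (hRlin : LinearTRS R) (hSlin : LinearTRS S)
    (hRcf : CollapseFree R) (hScf : CollapseFree S)
    -- `Γ` is a ranked alphabet containing the disjoint alphabets `Σ` and `Δ`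
    (ι₁ : σ → γ) (ι₂ : δ → γ)
    (hinj₁ : Function.Injective ι₁) (hinj₂ : Function.Injective ι₂)
    (har₁ : ∀ s, arγ (ι₁ s) = ar s) (har₂ : ∀ s, arγ (ι₂ s) = arδ s)
    (hdisj : ∀ s t, ι₁ s ≠ ι₂ t)
    (u w : Tm γ arγ) :
    -- `u →*_{R∪S} w` iff `u →*_R v →*_S w` for some `v`
    Steps (mapRules ι₁ har₁ R ∪ mapRules ι₂ har₂ S) u w ↔
      ∃ v : Tm γ arγ,
        Steps (mapRules ι₁ har₁ R) u v ∧ Steps (mapRules ι₂ har₂ S) v w :=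
  stmt_16_general R S hS hRlin hSlin hRcf hScf ι₁ ι₂ har₁ har₂ hdisj u w
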